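/- Let M, N, J be positive integers with J ≤ N and M ≤ N - ⌊N/J⌋. Let h_1, ..., h_N ∈ ℂ^M be such that any M of them are linearly independent. Then for any pairwise disjoint nonempty sets Λ_1, ..., Λ_J ⊆ {1,...,N}, there exists an index j* such that the only w ∈ ℂ^M with h_n^H w = 0 for all n ∉ Λ_{j*} is w = 0. -/

import Mathlib

/-!
Pigeonhole gives a group `Λ j` with at most `⌊N/J⌋` elements, so at least
`N - ⌊N/J⌋ ≥ M` channels lie outside it. By genericity `M` of them already span `ℂ^M`,
and a vector orthogonal to a spanning family is orthogonal to itself, hence zero.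
-/

open Finset Function Module Submodule
open scoped ComplexOrder

theorem Finset.exists_card_le_card_div_of_pairwise_disjoint {ι α : Type*} [Fintype ι]
    [Nonempty ι] [Fintype α] (s : ι → Finset α) (hs : Pairwise (Disjoint on s)) :
    ∃ i, #(s i) ≤ Fintype.card α / Fintype.card ι := by
  classical
  have hsum : ∑ i, #(s i) < ∑ _i : ι, (Fintype.card α / Fintype.card ι + 1) := calc
    ∑ i, #(s i) = #(univ.biUnion s) := (card_biUnion fun i _ j _ hij => hs hij).symm
    _ ≤ Fintype.card α := card_le_univ _
    _ < Fintype.card ι * (Fintype.card α / Fintype.card ι + 1) :=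
      Nat.lt_mul_div_succ _ Fintype.card_pos
    _ = ∑ _i : ι, (Fintype.card α / Fintype.card ι + 1) := by simp
  obtain ⟨i, -, hi⟩ := exists_lt_of_sum_lt hsum
  exact ⟨i, Nat.lt_succ_iff.mp hi⟩

theorem Matrix.eq_zero_of_star_dotProduct_eq_zero_of_span_eq_top {R n ι : Type*} [Fintype n]
    [Field R] [PartialOrder R] [StarRing R] [StarOrderedRing R] {v : ι → n → R}
    (hv : span R (Set.range v) = ⊤) {w : n → R} (hw : ∀ i, star (v i) ⬝ᵥ w = 0) : w = 0 := by
  have hspan : ∀ x ∈ span R (Set.range v), star x ⬝ᵥ w = 0 := by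
    intro x hx
    induction hx using Submodule.span_induction with
    | mem x hx => obtain ⟨i, rfl⟩ := hx; exact hw i
    | zero => simp
    | add x y _ _ hx hy => simp [add_dotProduct, hx, hy]
    | smul c x _ hx => simp [star_smul, smul_dotProduct, hx]
  exact dotProduct_star_self_eq_zero.mp (hspan w (hv ▸ mem_top))

theorem span_image_eq_top_of_forall_card_eq_finrank_linearIndependent {K V ι : Type*} [Field K]
    [AddCommGroup V] [Module K V] [FiniteDimensional K V] {v : ι → V}
    (hv : ∀ s : Finset ι, #s = finrank K V → LinearIndependent K (fun i : s => v i))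
    {t : Finset ι} (ht : finrank K V ≤ #t) : span K (v '' t) = ⊤ := by
  obtain ⟨s, hst, hs⟩ := exists_subset_card_eq ht
  refine eq_top_iff.mpr ?_
  calc ⊤ = span K (Set.range fun i : s => v i) :=
        ((hv s hs).span_eq_top_of_card_eq_finrank' (by simpa using hs)).symm
    _ ≤ span K (v '' t) := span_mono (by
        rintro _ ⟨i, rfl⟩; exact Set.mem_image_of_mem v (hst i.2))

theorem converse_beamformers_general (M N J : ℕ) (hJ : 0 < J)
    (hinfeas : M ≤ N - N / J)
    (h : Fin N → Fin M → ℂ)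
    (hgen : ∀ s : Finset (Fin N), s.card = M →
      LinearIndependent ℂ (fun i : s => h i))
    (Λ : Fin J → Finset (Fin N))
    (hdisj : ∀ i j : Fin J, i ≠ j → Disjoint (Λ i) (Λ j)) :
    ∃ j : Fin J, ∀ w : Fin M → ℂ,
      (∀ n : Fin N, n ∉ Λ j →
        ∑ m : Fin M, (starRingEnd ℂ) (h n m) * w m = 0) → w = 0 := by
  have : NeZero J := ⟨hJ.ne'⟩
  obtain ⟨j, hj⟩ := exists_card_le_card_div_of_pairwise_disjoint Λ hdisj
  simp only [Fintype.card_fin] at hj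
  have hcompl : finrank ℂ (Fin M → ℂ) ≤ #(Λ j)ᶜ := by
    rw [card_compl, Fintype.card_fin, finrank_fin_fun]
    omega
  have hspan := span_image_eq_top_of_forall_card_eq_finrank_linearIndependent
    (by simpa only [finrank_fin_fun] using hgen) hcompl
  refine ⟨j, fun w hw => ?_⟩
  rw [Set.image_eq_range] at hspan
  exact Matrix.eq_zero_of_star_dotProduct_eq_zero_of_span_eq_top hspan fun n =>
    hw n (mem_compl.mp n.2)

/-- Converse: with generic channels, if M ≤ N - ⌊N/J⌋ then for any pairwise
    disjoint nonempty groups some data stream admits only the zero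
    beamformer. -/
theorem converse_beamformers (M N J : ℕ) (hM : 0 < M) (hJ : 0 < J)
    (hJN : J ≤ N) (hinfeas : M ≤ N - N / J)
    (h : Fin N → Fin M → ℂ)
    (hgen : ∀ s : Finset (Fin N), s.card = M →
      LinearIndependent ℂ (fun i : s => h i))
    (Λ : Fin J → Finset (Fin N))
    (hdisj : ∀ i j : Fin J, i ≠ j → Disjoint (Λ i) (Λ j))
    (hne : ∀ j : Fin J, (Λ j).Nonempty) :
    ∃ j : Fin J, ∀ w : Fin M → ℂ,
      (∀ n : Fin N, n ∉ Λ j →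
        ∑ m : Fin M, (starRingEnd ℂ) (h n m) * w m = 0) → w = 0 :=
  converse_beamformers_general M N J hJ hinfeas h hgen Λ hdisj
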